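/- arXiv:math/0304471 — 9 statements merged into one kernel-verified Lean document; each statement's English description precedes it below -/
import Mathlib

section
/- Let $K$ be a field of characteristic different from $2$ and let $t \in K$ satisfy $t(t^2-1)(t^2+1) \neq 0$. Then the polynomial $f = (2x^2 - t)(4t^2x^4 + 4(t^2+t+1)x^2 + 1) \in K[x]$ has degree $6$ and is squarefree (i.e., separable). -/
open Polynomial

private lemma bez {K : Type*} [Field K] {c : K} (hc : c ≠ 0) {f g u v : K[X]}
    (h : u * f + v * g = C c) : IsCoprime f g :=
  ⟨C c⁻¹ * u, C c⁻¹ * v, by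
    have h2 : C c⁻¹ * u * f + C c⁻¹ * v * g = C c⁻¹ * (u * f + v * g) := by ring
    rw [h2, h, ← C_mul, inv_mul_cancel₀ hc, C_1]⟩

/-- The sextic defining the genus-2 curve `C(t)` of Theorem 1 has degree 6 and is
squarefree whenever `char K ≠ 2` and `t (t² - 1)(t² + 1) ≠ 0`. -/
theorem stmt_0 {K : Type*} [Field K] (hchar : (2 : K) ≠ 0) (t : K)
    (ht : t * (t ^ 2 - 1) * (t ^ 2 + 1) ≠ 0) :
    ((2 * X ^ 2 - C t) *
        (C (4 * t ^ 2) * X ^ 4 + C (4 * (t ^ 2 + t + 1)) * X ^ 2 + 1) : K[X]).natDegree = 6 ∧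
      Squarefree ((2 * X ^ 2 - C t) *
        (C (4 * t ^ 2) * X ^ 4 + C (4 * (t ^ 2 + t + 1)) * X ^ 2 + 1) : K[X]) := by
  have ht0 : t ≠ 0 := fun h => ht (by simp [h])
  have ht1 : t + 1 ≠ 0 := by
    intro h
    apply ht
    have : t ^ 2 - 1 = (t - 1) * (t + 1) := by ring
    rw [this, h]; ring
  have hti : t ^ 2 + 1 ≠ 0 := fun h => ht (by rw [h]; ring)
  set g : K[X] := 2 * X ^ 2 - C t with hg_def
  set h : K[X] := C (4 * t ^ 2) * X ^ 4 + C (4 * (t ^ 2 + t + 1)) * X ^ 2 + 1 with hh_def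
  -- derivatives
  have hdg : derivative g = 4 * X := by
    rw [hg_def]
    simp only [derivative_sub, derivative_mul, derivative_C, derivative_X_pow, derivative_ofNat]
    simp only [map_ofNat, map_natCast, Nat.cast_ofNat]
    ring
  have hdh : derivative h = X * (C (16 * t ^ 2) * X ^ 2 + C (8 * (t ^ 2 + t + 1))) := by
    rw [hh_def]
    simp only [derivative_add, derivative_mul, derivative_C, derivative_X_pow, derivative_one]
    simp only [map_mul, map_add, map_pow, map_one, map_ofNat, map_natCast]
    ring
  -- separability of g
  have hsg : g.Separable := by
    rw [Polynomial.Separable, hdg]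
    refine bez (c := 2 * t) (by exact mul_ne_zero hchar ht0) (u := -2) (v := X) ?_
    rw [hg_def]
    simp only [map_mul, map_ofNat]
    ring
  -- h coprime to X
  have hhx : IsCoprime h X := by
    refine bez (c := (1 : K)) one_ne_zero
      (u := 1) (v := -(C (4 * t ^ 2) * X ^ 3 + C (4 * (t ^ 2 + t + 1)) * X)) ?_
    rw [hh_def]
    simp only [map_mul, map_add, map_pow, map_one, map_ofNat]
    ring
  -- h coprime to the quadratic factor of h'
  have hhp : IsCoprime h (C (16 * t ^ 2) * X ^ 2 + C (8 * (t ^ 2 + t + 1))) := by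
    refine bez (c := 8 * t ^ 2 * (t ^ 2 - (t ^ 2 + t + 1) ^ 2)) ?_
      (u := C (8 * t ^ 4)) (v := -(C (2 * t ^ 4) * X ^ 2 + C (t ^ 2 * (t ^ 2 + t + 1)))) ?_
    · have he : t ^ 2 - (t ^ 2 + t + 1) ^ 2 = -((t + 1) ^ 2 * (t ^ 2 + 1)) := by ring
      rw [he]
      have h8 : (8 : K) ≠ 0 := by
        have := pow_ne_zero 3 hchar; norm_num at this; exact this
      exact mul_ne_zero (mul_ne_zero h8 (pow_ne_zero 2 ht0))
        (neg_ne_zero.mpr (mul_ne_zero (pow_ne_zero 2 ht1) hti))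
    · rw [hh_def]
      simp only [map_mul, map_add, map_pow, map_sub, map_one, map_ofNat]
      ring
  -- separability of h
  have hsh : h.Separable := by
    rw [Polynomial.Separable, hdh]
    exact IsCoprime.mul_right hhx hhp
  -- g coprime to h
  have hgh : IsCoprime g h := by
    refine bez (c := (t + 1) ^ 2 * (t ^ 2 + 1))
      (mul_ne_zero (pow_ne_zero 2 ht1) hti)
      (u := -(C (2 * t ^ 2) * X ^ 2 + C (t ^ 3 + 2 * (t ^ 2 + t + 1)))) (v := 1) ?_
    rw [hg_def, hh_def]
    simp only [map_mul, map_add, map_pow, map_one, map_ofNat]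
    ring
  have hsep : (g * h).Separable := hsg.mul hsh hgh
  have hsq : Squarefree (g * h) := hsep.squarefree
  refine ⟨?_, hsq⟩
  have hgne : g ≠ 0 := fun h0 => not_squarefree_zero (by rwa [h0, zero_mul] at hsq)
  have hhne : h ≠ 0 := fun h0 => not_squarefree_zero (by rwa [h0, mul_zero] at hsq)
  rw [natDegree_mul hgne hhne]
  have h1 : g.natDegree = 2 := by rw [hg_def]; compute_degree!
  have h2 : h.natDegree = 4 := by
    have h4 : (4 : K) ≠ 0 := by
      have := pow_ne_zero 2 hchar; norm_num at this; exact this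
    rw [hh_def]; compute_degree!
  rw [h1, h2]
end

section
/- Let $K$ be a field of characteristic different from $2$, let $r, s, t, Q \in K$ with $s \neq 1$, $Q \neq 0$ and $Q^2 = st$. Set $P = (1-s)/4$, $A = (r + 6st - 2t)/(4PQ)$, $B = (APQ - Q^2 + 4P^2 + 1)/P^2$, $C = 4(AP - Q)/P$, and set $c_2 = r + 4t$, $c_1 = 4t(r + s^3 - s^2t - 2s^2 + 5s + t)$, $c_0 = 4t(s-1)(rs^2 - rst - rs - rt - 8st)$. Then for every $\alpha \in K$, putting $\beta = (s-1)(Q\alpha - 2t)$, one has $\beta^3 - c_2\beta^2 + c_1\beta - c_0 = (s-1)^3Q^3(\alpha^3 + A\alpha^2 + B\alpha + C)$. In particular $\beta$ is a root of $T^3 - c_2T^2 + c_1T - c_0$ if and only if $\alpha$ is a root of $T^3 + AT^2 + BT + C$. -/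
/-! Substituting `β = (s-1)(Qα - 2t)` turns the cubic `h` into a polynomial in `α` whose
coefficients, once `Q²` is replaced by `st`, are `(s-1)³Q³` times those of Bending's cubic;
the latter are read off from `A`, `B`, `C` with their denominators `(1-s)Q` and `(1-s)²` cleared.
Since `(s-1)³Q³ ≠ 0`, the two cubics then vanish simultaneously. -/

theorem cubic_substitution_identity {K : Type*} [CommRing K] {r s t Q A B C : K} (α : K)
    (hQ2 : Q ^ 2 = s * t)
    (hA : (1 - s) * Q * A = r + 6 * s * t - 2 * t)
    (hB : (1 - s) ^ 2 * B = 4 * (r + 6 * s * t - 2 * t) - 16 * Q ^ 2 + 4 * (1 - s) ^ 2 + 16)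
    (hC : (1 - s) * Q * C = 4 * (r + 6 * s * t - 2 * t) - 16 * Q ^ 2) :
    ((s - 1) * (Q * α - 2 * t)) ^ 3 - (r + 4 * t) * ((s - 1) * (Q * α - 2 * t)) ^ 2
      + 4 * t * (r + s ^ 3 - s ^ 2 * t - 2 * s ^ 2 + 5 * s + t) * ((s - 1) * (Q * α - 2 * t))
      - 4 * t * (s - 1) * (r * s ^ 2 - r * s * t - r * s - r * t - 8 * s * t) =
        (s - 1) ^ 3 * Q ^ 3 * (α ^ 3 + A * α ^ 2 + B * α + C) := by
  linear_combination (s - 1) ^ 2 * Q ^ 2 * α ^ 2 * hA - (s - 1) * Q ^ 3 * α * hB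
    + (s - 1) ^ 2 * Q ^ 2 * hC
    + 4 * (1 - s) * (Q * α * ((1 - s) ^ 2 + 4 + r - 4 * Q ^ 2 - 2 * t * (1 - s))
      + (1 - s) * (r - 4 * Q ^ 2 - 2 * t * (1 - s))) * hQ2

/-- The identity relating the roots of the cubic of Bending's construction to the roots
of the cubic `h` of the paper's variant construction (Theorem 4.2), via
`β = (s-1)(Qα - 2t)`. -/
theorem stmt_3 {K : Type*} [Field K] (hchar : (2 : K) ≠ 0) (r s t Q : K)
    (hs : s ≠ 1) (hQ : Q ≠ 0) (hQ2 : Q ^ 2 = s * t) :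
    let P : K := (1 - s) / 4
    let A : K := (r + 6 * s * t - 2 * t) / (4 * P * Q)
    let B : K := (A * P * Q - Q ^ 2 + 4 * P ^ 2 + 1) / P ^ 2
    let C : K := 4 * (A * P - Q) / P
    let c2 : K := r + 4 * t
    let c1 : K := 4 * t * (r + s ^ 3 - s ^ 2 * t - 2 * s ^ 2 + 5 * s + t)
    let c0 : K := 4 * t * (s - 1) * (r * s ^ 2 - r * s * t - r * s - r * t - 8 * s * t)
    ∀ α : K,
      let β : K := (s - 1) * (Q * α - 2 * t)
      β ^ 3 - c2 * β ^ 2 + c1 * β - c0 =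
          (s - 1) ^ 3 * Q ^ 3 * (α ^ 3 + A * α ^ 2 + B * α + C) ∧
        (β ^ 3 - c2 * β ^ 2 + c1 * β - c0 = 0 ↔
          α ^ 3 + A * α ^ 2 + B * α + C = 0) := by
  intro P A B C c2 c1 c0 α β
  have h4 : (4 : K) ≠ 0 := by simpa [show (4 : K) = 2 * 2 by norm_num] using hchar
  have hs' : 1 - s ≠ 0 := sub_ne_zero.mpr hs.symm
  have hA : (1 - s) * Q * A = r + 6 * s * t - 2 * t := by
    simp only [A, P]
    field_simp
  have hB : (1 - s) ^ 2 * B =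
      4 * (r + 6 * s * t - 2 * t) - 16 * Q ^ 2 + 4 * (1 - s) ^ 2 + 16 := by
    simp only [B, P]
    field_simp
    linear_combination 4 * hA
  have hC : (1 - s) * Q * C = 4 * (r + 6 * s * t - 2 * t) - 16 * Q ^ 2 := by
    simp only [C, P]
    field_simp
    linear_combination 4 * hA
  have key := cubic_substitution_identity α hQ2 hA hB hC
  refine ⟨key, ?_⟩
  rw [key]
  exact mul_eq_zero_iff_left (mul_ne_zero (pow_ne_zero 3 (sub_ne_zero.mpr hs)) (pow_ne_zero 3 hQ))
end

section
/- Let $K$ be a field of characteristic different from $2$ and let $s, u \in K$. Define $c_2 = 4s + u - 6$, $c_1 = -4(s-1)(s^2 - 6s - u + 3)$, $c_0 = 4(s-1)^3(-8s - u + 2)$, and define $a = -4s(s^2 + 11s - 11)$, $b = -8s^2(s-1)(4s-1)$, $c = -16s^2(s-1)(28s^2 - 19s + 1)$. Then the discriminant of the cubic polynomial $T^3 - c_2T^2 + c_1T - c_0$ equals $16s(s-1)^2\bigl((u^2 + a)^2 + 8bu + 4c\bigr)$. -/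
/-- The discriminant of the cubic `T³ - c₂T² + c₁T - c₀` (obtained by substituting
`t = s-1`, `r = u-2` into the cubic of Theorem 4.2) equals
`16 s (s-1)² ((u² + a)² + 8bu + 4c)`.  Here the discriminant of a cubic
`T³ + pT² + qT + r` is `p²q² - 4q³ - 4p³r - 27r² + 18pqr`. -/
theorem stmt_4 {K : Type*} [Field K] (hchar : (2 : K) ≠ 0) (s u : K) :
    let c2 : K := 4 * s + u - 6
    let c1 : K := -4 * (s - 1) * (s ^ 2 - 6 * s - u + 3)
    let c0 : K := 4 * (s - 1) ^ 3 * (-8 * s - u + 2)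
    let a : K := -4 * s * (s ^ 2 + 11 * s - 11)
    let b : K := -8 * s ^ 2 * (s - 1) * (4 * s - 1)
    let c : K := -16 * s ^ 2 * (s - 1) * (28 * s ^ 2 - 19 * s + 1)
    (-c2) ^ 2 * c1 ^ 2 - 4 * c1 ^ 3 - 4 * (-c2) ^ 3 * (-c0) - 27 * (-c0) ^ 2
        + 18 * (-c2) * c1 * (-c0) =
      16 * s * (s - 1) ^ 2 * ((u ^ 2 + a) ^ 2 + 8 * b * u + 4 * c) := by
  simp only []
  ring
end

section
/- Let $K$ be a field of characteristic different from $2$ and let $s, u \in K$ with $s(s-1)(s-2) \neq 0$. Define $c_2 = 4s + u - 6$, $c_1 = -4(s-1)(s^2 - 6s - u + 3)$, $c_0 = 4(s-1)^3(-8s - u + 2)$, and let $h = T^3 - c_2T^2 + c_1T - c_0 \in K[T]$. Assume $h$ is squarefree and $c_0 \neq 0$. Let $L = K[T]/(h)$, let $\beta \in L$ be the class of $T$, let $\Delta \in K$ be the discriminant of $h$, and let $\Delta' = 4s\beta^2 \in L$ (the discriminant of the quadratic $x^2 - 2\beta x + (1-s)\beta^2 \in L[x]$). Then $\Delta\cdot\Delta'$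 is a square in $L$ if and only if $(u^2 + a)^2 + 8bu + 4c$ is a square in $K$, where $a = -4s(s^2 + 11s - 11)$, $b = -8s^2(s-1)(4s-1)$, $c = -16s^2(s-1)(28s^2 - 19s + 1)$. -/
open Polynomial

private lemma odd_ext_isSquare {K L : Type*} [Field K] [Field L] [Algebra K L]
    (hodd : Odd (Module.finrank K L)) {d : K}
    (hd : IsSquare (algebraMap K L d)) : IsSquare d := by
  have hfin : FiniteDimensional K L := by
    by_contra hinf
    rw [Module.finrank_of_not_finite hinf] at hodd
    simp at hodd
  obtain ⟨x, hx⟩ := hd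
  have hint : IsIntegral K x := .of_finite K x
  have hne : (X ^ 2 - C d : K[X]) ≠ 0 := X_pow_sub_C_ne_zero two_pos d
  have hdvd : minpoly K x ∣ X ^ 2 - C d := by
    apply minpoly.dvd
    rw [map_sub, map_pow, aeval_X, aeval_C, hx, sq, sub_self]
  have hle : (minpoly K x).natDegree ≤ 2 := by
    have := Polynomial.natDegree_le_of_dvd hdvd hne
    rwa [natDegree_X_pow_sub_C] at this
  have hpos : 0 < (minpoly K x).natDegree := minpoly.natDegree_pos hint
  have hdvdfr : (minpoly K x).natDegree ∣ Module.finrank K L := minpoly.degree_dvd hint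
  have hone : (minpoly K x).natDegree = 1 := by
    rcases (by omega : (minpoly K x).natDegree = 1 ∨ (minpoly K x).natDegree = 2) with h1 | h2
    · exact h1
    · exfalso
      rw [h2] at hdvdfr
      exact (Nat.not_odd_iff_even.mpr (even_iff_two_dvd.mpr hdvdfr)) hodd
  obtain ⟨e, he⟩ := minpoly.natDegree_eq_one_iff.mp hone
  refine ⟨e, ?_⟩
  apply (algebraMap K L).injective
  rw [map_mul, he, ← hx]

/-- Proposition 6.2 of the paper: with `t = s-1` and `r = u-2` in the construction of
Theorem 4.2, the product `Δ·Δ'` of the discriminant `Δ` of the cubic `h` and the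
discriminant `Δ' = 4sβ²` of the quadratic `x² - 2βx + (1-s)β²` is a square in the
algebra `L = K[T]/(h)` if and only if `(u² + a)² + 8bu + 4c` is a square in `K`. -/
theorem stmt_5 {K : Type*} [Field K] (hchar : (2 : K) ≠ 0) (s u : K)
    (hs : s * (s - 1) * (s - 2) ≠ 0)
    (c2 c1 c0 a b c Δ : K)
    (hc2 : c2 = 4 * s + u - 6)
    (hc1 : c1 = -4 * (s - 1) * (s ^ 2 - 6 * s - u + 3))
    (hc0 : c0 = 4 * (s - 1) ^ 3 * (-8 * s - u + 2))
    (ha : a = -4 * s * (s ^ 2 + 11 * s - 11))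
    (hb : b = -8 * s ^ 2 * (s - 1) * (4 * s - 1))
    (hc : c = -16 * s ^ 2 * (s - 1) * (28 * s ^ 2 - 19 * s + 1))
    (hΔ : Δ = (-c2) ^ 2 * c1 ^ 2 - 4 * c1 ^ 3 - 4 * (-c2) ^ 3 * (-c0)
        - 27 * (-c0) ^ 2 + 18 * (-c2) * c1 * (-c0))
    (h : K[X]) (hh : h = X ^ 3 - C c2 * X ^ 2 + C c1 * X - C c0)
    (hsqfree : Squarefree h) (hc0ne : c0 ≠ 0) :
    IsSquare (algebraMap K (AdjoinRoot h) Δ *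
        (algebraMap K (AdjoinRoot h) (4 * s) * AdjoinRoot.root h ^ 2)) ↔
      IsSquare ((u ^ 2 + a) ^ 2 + 8 * b * u + 4 * c) := by
  -- abbreviations
  set D : K := (u ^ 2 + a) ^ 2 + 8 * b * u + 4 * c with hD
  -- the key algebraic identity
  have key : Δ * (4 * s) = (8 * s * (s - 1)) ^ 2 * D := by
    rw [hD, hΔ, ha, hb, hc, hc2, hc1, hc0]; ring
  -- basic facts about s
  have hs0 : s ≠ 0 := fun h0 => hs (by rw [h0]; ring)
  have hs1 : s - 1 ≠ 0 := fun h0 => hs (by rw [show (s:K) = 1 by linear_combination h0]; ring)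
  have h8 : (8 : K) ≠ 0 := by
    have := pow_ne_zero 3 hchar
    norm_num at this ⊢
    exact this
  have hm : (8 * s * (s - 1) : K) ≠ 0 := mul_ne_zero (mul_ne_zero h8 hs0) hs1
  -- degree facts about h
  have hdeg : h.natDegree = 3 := by rw [hh]; compute_degree!
  have hne : h ≠ 0 := fun h0 => by simp [h0] at hdeg
  have hcoeff0 : h.coeff 0 = -c0 := by
    rw [hh]
    simp [coeff_X_pow]
  constructor
  · -- hard direction
    intro hsq
    -- find an odd-degree monic irreducible factor g of h
    have hnu : ¬ IsUnit h := by
      intro hu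
      have := Polynomial.natDegree_eq_zero_of_isUnit hu
      omega
    obtain ⟨g₀, hg₀irr, hg₀dvd⟩ := WfDvdMonoid.exists_irreducible_factor hnu hne
    have hg₀pos : 0 < g₀.natDegree := hg₀irr.natDegree_pos
    have hg₀le : g₀.natDegree ≤ 3 := hdeg ▸ Polynomial.natDegree_le_of_dvd hg₀dvd hne
    obtain ⟨g, hgirr, hgdvd, hgodd⟩ :
        ∃ g : K[X], Irreducible g ∧ g ∣ h ∧ Odd g.natDegree := by
      rcases Nat.even_or_odd g₀.natDegree with hev | hodd
      case inr => exact ⟨g₀, hg₀irr, hg₀dvd, hodd⟩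
      have h2 : g₀.natDegree = 2 := by obtain ⟨k, hk⟩ := hev; omega
      rcases (Or.inr h2 : Odd g₀.natDegree ∨ g₀.natDegree = 2) with hodd | h2
      · exact ⟨g₀, hg₀irr, hg₀dvd, hodd⟩
      · obtain ⟨q, hq⟩ := hg₀dvd
        have hq0 : q ≠ 0 := fun h0 => hne (by rw [hq, h0, mul_zero])
        have hqdeg : q.natDegree = 1 := by
          have := Polynomial.natDegree_mul hg₀irr.ne_zero hq0
          rw [← hq, hdeg, h2] at this
          omega
        refine ⟨q, ?_, ⟨g₀, by rw [hq, mul_comm]⟩, by rw [hqdeg]; exact odd_one⟩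
        exact Polynomial.irreducible_of_degree_eq_one
          ((Polynomial.degree_eq_iff_natDegree_eq hq0).mpr hqdeg)
    -- the field (AdjoinRoot g) = K[T]/(g)
    haveI : Fact (Irreducible g) := ⟨hgirr⟩
    have hgne : g ≠ 0 := hgirr.ne_zero
    -- map from AdjoinRoot h to F
    obtain ⟨q, hq⟩ := hgdvd
    have heval : Polynomial.eval₂ (algebraMap K (AdjoinRoot g)) (AdjoinRoot.root g) h = 0 := by
      rw [hq, eval₂_mul, AdjoinRoot.algebraMap_eq, AdjoinRoot.eval₂_root, zero_mul]
    set φ : AdjoinRoot h →+* (AdjoinRoot g) := AdjoinRoot.lift (algebraMap K (AdjoinRoot g)) (AdjoinRoot.root g) heval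
      with hφ
    have hφof : ∀ x : K, φ (algebraMap K (AdjoinRoot h) x) = algebraMap K (AdjoinRoot g) x := by
      intro x
      rw [AdjoinRoot.algebraMap_eq, AdjoinRoot.lift_of]
    have hφroot : φ (AdjoinRoot.root h) = AdjoinRoot.root g := AdjoinRoot.lift_root heval
    -- root g ≠ 0
    have hg0ne : g.coeff 0 ≠ 0 := by
      intro h0
      apply hc0ne
      have h2 := Polynomial.mul_coeff_zero g q
      rw [← hq, hcoeff0, h0, zero_mul] at h2
      exact neg_eq_zero.mp h2
    have hrootne : AdjoinRoot.root g ≠ 0 := by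
      intro h0
      have h1 : g.eval₂ (AdjoinRoot.of g) (AdjoinRoot.root g) = 0 := AdjoinRoot.eval₂_root g
      rw [h0, Polynomial.eval₂_at_zero, ← AdjoinRoot.algebraMap_eq] at h1
      exact hg0ne ((map_eq_zero_iff _ (algebraMap K (AdjoinRoot g)).injective).mp h1)
    -- push the square to F
    obtain ⟨y, hy⟩ := hsq
    set M : AdjoinRoot g := algebraMap K (AdjoinRoot g) (8 * s * (s - 1)) * AdjoinRoot.root g
      with hM
    have e1 : algebraMap K (AdjoinRoot g) Δ * algebraMap K (AdjoinRoot g) (4 * s)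
        = algebraMap K (AdjoinRoot g) ((8 * s * (s - 1)) ^ 2)
          * algebraMap K (AdjoinRoot g) D := by
      rw [← map_mul, ← map_mul, key]
    have hEq : M ^ 2 * algebraMap K (AdjoinRoot g) D = φ y * φ y := by
      rw [← map_mul φ y y, ← hy, map_mul, map_mul, hφof, hφof, map_pow, hφroot, hM]
      calc (algebraMap K (AdjoinRoot g) (8 * s * (s - 1)) * AdjoinRoot.root g) ^ 2
            * algebraMap K (AdjoinRoot g) D
          = (algebraMap K (AdjoinRoot g) ((8 * s * (s - 1)) ^ 2)
              * algebraMap K (AdjoinRoot g) D) * AdjoinRoot.root g ^ 2 := by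
            rw [map_pow]; ring
        _ = (algebraMap K (AdjoinRoot g) Δ * algebraMap K (AdjoinRoot g) (4 * s))
              * AdjoinRoot.root g ^ 2 := by rw [e1]
        _ = algebraMap K (AdjoinRoot g) Δ *
            (algebraMap K (AdjoinRoot g) (4 * s) * AdjoinRoot.root g ^ 2) := by ring
    have hMne : M ≠ 0 :=
      mul_ne_zero (fun h0 => hm ((map_eq_zero_iff _
        (algebraMap K (AdjoinRoot g)).injective).mp h0)) hrootne
    have hMinv : M * M⁻¹ = 1 := mul_inv_cancel₀ hMne
    have hsqFD : IsSquare (algebraMap K (AdjoinRoot g) D) := by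
      refine ⟨φ y * M⁻¹, ?_⟩
      calc algebraMap K (AdjoinRoot g) D
          = (M * M⁻¹) * (M * M⁻¹) * algebraMap K (AdjoinRoot g) D := by rw [hMinv]; ring
        _ = (M ^ 2 * algebraMap K (AdjoinRoot g) D) * (M⁻¹ * M⁻¹) := by ring
        _ = (φ y * φ y) * (M⁻¹ * M⁻¹) := by rw [hEq]
        _ = (φ y * M⁻¹) * (φ y * M⁻¹) := by ring
    -- descend to K via odd-degree extension
    have hfr : Module.finrank K (AdjoinRoot g) = g.natDegree := by
      rw [(AdjoinRoot.powerBasis hgne).finrank, AdjoinRoot.powerBasis_dim]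
    exact odd_ext_isSquare (by rw [hfr]; exact hgodd) hsqFD
  · -- easy direction
    rintro ⟨e, he⟩
    refine ⟨algebraMap K (AdjoinRoot h) (8 * s * (s - 1) * e) * AdjoinRoot.root h, ?_⟩
    have h1 : Δ * (4 * s) = (8 * s * (s - 1) * e) * (8 * s * (s - 1) * e) := by
      rw [key, he]; ring
    rw [← mul_assoc, ← map_mul, h1, map_mul]
    ring
end

section
/- Let $K$ be a field of characteristic different from $2$ and let $a, b, c \in K$. (i) If $x, y \in K$ satisfy $y^2 = x^3 - ax^2 - cx + b^2$ and $x \neq 0$, then $u := (y-b)/x$ and $z := 2x - u^2 - a$ satisfy $z^2 = (u^2 + a)^2 + 8bu + 4c$, and moreover $(z + u^2 + a)/2 = x$ and $ux + b = y$. (ii) If $u, z \in K$ satisfy $z^2 = (u^2 + a)^2 + 8bu + 4c$, then $x := (z + u^2 + a)/2$ and $y := ux + b$ satisfy $y^2 = x^3 - ax^2 - cx + b^2$, and if $x \neq 0$ then $(y-b)/x = u$ and $2x - u^2 - a = z$. -/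
/-!
Substituting the line `y = u x + b` into `y² = x³ - a x² - c x + b²` and cancelling the
root `x = 0` leaves the quadratic `x² - (u² + a) x - (2 b u + c) = 0` in `x`. Completing the
square, this quadratic is `(2x - u² - a)² = (u² + a)² + 8 b u + 4 c`, which is the quartic
`F` with `z = 2x - u² - a`.
-/

theorem sq_two_mul_sub_eq_iff {R : Type*} [CommRing R] [NoZeroDivisors R] [NeZero (2 : R)]
    (p q x : R) : (2 * x - p) ^ 2 = p ^ 2 + 4 * q ↔ x ^ 2 - p * x - q = 0 := by
  have h4 : (4 : R) ≠ 0 := by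
    simpa [show (4 : R) = 2 * 2 by norm_num] using NeZero.ne (2 : R)
  rw [← sub_eq_zero, show (2 * x - p) ^ 2 - (p ^ 2 + 4 * q) = 4 * (x ^ 2 - p * x - q) by ring,
    mul_eq_zero, or_iff_right h4]

section Weierstrass

variable {R : Type*} [CommRing R] (a b c : R)

theorem sq_line_sub_weierstrass (u x : R) :
    (u * x + b) ^ 2 - (x ^ 3 - a * x ^ 2 - c * x + b ^ 2) =
      -x * (x ^ 2 - (u ^ 2 + a) * x - (2 * b * u + c)) := by
  ring

variable {a b c}

theorem weierstrass_of_quadratic {u x : R} (h : x ^ 2 - (u ^ 2 + a) * x - (2 * b * u + c) = 0) :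
    (u * x + b) ^ 2 = x ^ 3 - a * x ^ 2 - c * x + b ^ 2 := by
  rw [← sub_eq_zero, sq_line_sub_weierstrass, h, mul_zero]

theorem quadratic_of_weierstrass [NoZeroDivisors R] {u x : R} (hx : x ≠ 0)
    (h : (u * x + b) ^ 2 = x ^ 3 - a * x ^ 2 - c * x + b ^ 2) :
    x ^ 2 - (u ^ 2 + a) * x - (2 * b * u + c) = 0 := by
  rw [← sub_eq_zero, sq_line_sub_weierstrass, mul_eq_zero] at h
  exact h.resolve_left (neg_ne_zero.mpr hx)

end Weierstrass

/-- The explicit birational isomorphism of Proposition 6.3(a) between the curve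
`F : z² = (u²+a)² + 8bu + 4c` and the elliptic curve `E : y² = x³ - ax² - cx + b²`,
given by `u = (y-b)/x`, `z = 2x - u² - a`, with inverse `x = (z + u² + a)/2`,
`y = ux + b`. -/
theorem stmt_6 {K : Type*} [Field K] (hchar : (2 : K) ≠ 0) (a b c : K) :
    (∀ x y : K, y ^ 2 = x ^ 3 - a * x ^ 2 - c * x + b ^ 2 → x ≠ 0 →
      (2 * x - ((y - b) / x) ^ 2 - a) ^ 2 =
          (((y - b) / x) ^ 2 + a) ^ 2 + 8 * b * ((y - b) / x) + 4 * c ∧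
        ((2 * x - ((y - b) / x) ^ 2 - a) + ((y - b) / x) ^ 2 + a) / 2 = x ∧
        ((y - b) / x) * x + b = y) ∧
    (∀ u z : K, z ^ 2 = (u ^ 2 + a) ^ 2 + 8 * b * u + 4 * c →
      (u * ((z + u ^ 2 + a) / 2) + b) ^ 2 =
          ((z + u ^ 2 + a) / 2) ^ 3 - a * ((z + u ^ 2 + a) / 2) ^ 2
            - c * ((z + u ^ 2 + a) / 2) + b ^ 2 ∧
        ((z + u ^ 2 + a) / 2 ≠ 0 →
          ((u * ((z + u ^ 2 + a) / 2) + b) - b) / ((z + u ^ 2 + a) / 2) = u ∧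
          2 * ((z + u ^ 2 + a) / 2) - u ^ 2 - a = z)) := by
  have : NeZero (2 : K) := ⟨hchar⟩
  refine ⟨fun x y hE hx => ?_, fun u z hF => ?_⟩
  · set u := (y - b) / x
    have hy : u * x + b = y := by rw [div_mul_cancel₀ _ hx, sub_add_cancel]
    have hquad := quadratic_of_weierstrass hx (hy ▸ hE)
    have hquartic := (sq_two_mul_sub_eq_iff _ _ x).mpr hquad
    exact ⟨by linear_combination hquartic, by field_simp; ring, hy⟩
  · set x := (z + u ^ 2 + a) / 2
    have hz : 2 * x - (u ^ 2 + a) = z := by rw [mul_div_cancel₀ _ hchar]; ring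
    have hquartic : (2 * x - (u ^ 2 + a)) ^ 2 = (u ^ 2 + a) ^ 2 + 4 * (2 * b * u + c) := by
      rw [hz, hF]; ring
    have hquad := (sq_two_mul_sub_eq_iff _ _ x).mp hquartic
    refine ⟨weierstrass_of_quadratic hquad, fun hx => ⟨?_, by linear_combination hz⟩⟩
    rw [add_sub_cancel_right, mul_div_cancel_right₀ _ hx]
end

section
/- Let $K$ be a field of characteristic different from $2$ and let $a, b, c \in K$ be such that the Weierstrass curve $E : y^2 = x^3 - ax^2 - cx + b^2$ over $K$ has nonzero discriminant. Let $u, z \in K$ satisfy $z^2 = (u^2 + a)^2 + 8bu + 4c$, and set $x = (z + u^2 + a)/2$, $\tilde{x} = (-z + u^2 + a)/2$, $y = ux + b$, $\tilde{y} = u\tilde{x} + b$. Assume $(z, y) \neq (0, 0)$. Then $Q := (x, y)$, $\tilde{Q} := (\tilde{x}, \tilde{y})$ and $P := (0, b)$ are affine points of $E$, and in the group of points of $E$ one has $\tilde{Q} = -(Q + P)$. -/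
/-!
Substituting `y = u x + b` into `E` gives `x (x² - (u² + a) x - (c + 2bu)) = 0`, and since `z²` is
the discriminant of the quadratic factor, its roots are `x` and `x̃`. So the line `y = u x + b`
meets `E` exactly in `P`, `Q` and `Q̃`, whence `P + Q + Q̃ = 0`. When `x = 0` this line is the
tangent at `P = Q`; it is not vertical because `P` is nonsingular.
-/

open WeierstrassCurve Affine

namespace WeierstrassCurve.Affine.Point

variable {F : Type*} [Field F] [DecidableEq F] {W : Affine F}

lemma some_eq_neg_add_of_slope_eq {x₁ x₂ x₃ y₁ y₂ y₃ ℓ : F} {h₁ : W.Nonsingular x₁ y₁}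
    {h₂ : W.Nonsingular x₂ y₂} {h₃ : W.Nonsingular x₃ y₃}
    (hxy : ¬(x₁ = x₂ ∧ y₁ = W.negY x₂ y₂)) (hℓ : W.slope x₁ x₂ y₁ y₂ = ℓ)
    (hx₃ : x₃ = W.addX x₁ x₂ ℓ) (hy₃ : y₃ = ℓ * (x₃ - x₁) + y₁) :
    some x₃ y₃ h₃ = -(some x₁ y₁ h₁ + some x₂ y₂ h₂) := by
  subst hℓ hx₃ hy₃
  rw [add_some hxy, neg_some, some.injEq]
  exact ⟨rfl, (negY_negY ..).symm⟩

end WeierstrassCurve.Affine.Point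

section CubicModel

variable {K : Type*} [Field K] {a b c u x : K}

abbrev cubicModel (a b c : K) : Affine K := ⟨0, -a, 0, -c, b ^ 2⟩

lemma cubicModel_equation_iff {y : K} :
    (cubicModel a b c).Equation x y ↔ y ^ 2 = x ^ 3 - a * x ^ 2 - c * x + b ^ 2 := by
  rw [equation_iff]
  constructor <;> intro h <;> linear_combination h

lemma cubicModel_equation_zero : (cubicModel a b c).Equation 0 b := by
  rw [cubicModel_equation_iff]
  ring

lemma chord_quadratic_of_sq_eq {z : K} (h2 : (2 : K) ≠ 0)
    (hz : z ^ 2 = (u ^ 2 + a) ^ 2 + 8 * b * u + 4 * c) (hx : 2 * x = z + u ^ 2 + a) :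
    x ^ 2 - (u ^ 2 + a) * x - (c + 2 * b * u) = 0 := by
  apply mul_left_cancel₀ (mul_ne_zero h2 h2)
  linear_combination hz + (2 * x - u ^ 2 - a + z) * hx

lemma cubicModel_equation_of_chord (hx : x ^ 2 - (u ^ 2 + a) * x - (c + 2 * b * u) = 0) :
    (cubicModel a b c).Equation x (u * x + b) := by
  rw [cubicModel_equation_iff]
  linear_combination (-x) * hx

lemma cubicModel_not_vertical (hP : (cubicModel a b c).Nonsingular 0 b)
    (hx : x ^ 2 - (u ^ 2 + a) * x - (c + 2 * b * u) = 0) :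
    ¬(x = 0 ∧ u * x + b = (cubicModel a b c).negY 0 b) := by
  rintro ⟨rfl, hy⟩
  have hb : 2 * b = 0 := by
    rw [negY] at hy
    linear_combination hy
  have hc : c = 0 := by linear_combination (-1 : K) * hx - u * hb
  rcases ((nonsingular_iff _ _).mp hP).2 with h | h
  · exact h (by linear_combination hc)
  · exact h (by linear_combination hb)

lemma cubicModel_slope_eq [DecidableEq K] (hP : (cubicModel a b c).Nonsingular 0 b)
    (hx : x ^ 2 - (u ^ 2 + a) * x - (c + 2 * b * u) = 0) :
    (cubicModel a b c).slope x 0 (u * x + b) b = u := by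
  by_cases h0 : x = 0
  · have hy := fun hy ↦ cubicModel_not_vertical hP hx ⟨h0, hy⟩
    subst h0
    simp only [mul_zero, zero_add] at hy ⊢
    rw [slope_of_Y_ne rfl hy, div_eq_iff (sub_ne_zero.mpr hy), negY]
    linear_combination hx
  · rw [slope_of_X_ne h0, div_eq_iff (sub_ne_zero.mpr h0)]
    ring

end CubicModel

open Classical in
theorem stmt_9_general {K : Type*} [Field K] (hchar : (2 : K) ≠ 0) (a b c : K)
    (W : WeierstrassCurve.Affine K) (hW : W = ⟨0, -a, 0, -c, b ^ 2⟩)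
    (hΔ : W.Δ ≠ 0)
    (u z : K) (hz : z ^ 2 = (u ^ 2 + a) ^ 2 + 8 * b * u + 4 * c)
    (x xt y yt : K)
    (hx : x = (z + u ^ 2 + a) / 2) (hxt : xt = (-z + u ^ 2 + a) / 2)
    (hy : y = u * x + b) (hyt : yt = u * xt + b) :
    ∃ (hQ : W.Nonsingular x y) (hQt : W.Nonsingular xt yt)
      (hP : W.Nonsingular 0 b),
      WeierstrassCurve.Affine.Point.some _ _ hQt =
        -(WeierstrassCurve.Affine.Point.some _ _ hQ +
            WeierstrassCurve.Affine.Point.some _ _ hP) := by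
  subst hW hy hyt
  rw [eq_div_iff hchar, mul_comm] at hx hxt
  have hxq := chord_quadratic_of_sq_eq hchar hz hx
  have hxtq := chord_quadratic_of_sq_eq hchar (z := -z) (by rw [neg_sq, hz]) hxt
  have nonsingular_of_equation {x y : K} :
      (cubicModel a b c).Equation x y → (cubicModel a b c).Nonsingular x y :=
    (equation_iff_nonsingular_of_Δ_ne_zero hΔ).mp
  have hP := nonsingular_of_equation cubicModel_equation_zero
  refine ⟨nonsingular_of_equation (cubicModel_equation_of_chord hxq),
    nonsingular_of_equation (cubicModel_equation_of_chord hxtq), hP,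
    Point.some_eq_neg_add_of_slope_eq (cubicModel_not_vertical hP hxq)
      (cubicModel_slope_eq hP hxq) ?_ (by ring)⟩
  rw [addX]
  apply mul_left_cancel₀ hchar
  linear_combination hx + hxt

open Classical in
/-- Proposition 6.3(d): under the explicit isomorphism between
`F : z² = (u²+a)² + 8bu + 4c` and `E : y² = x³ - ax² - cx + b²`, the involution
`(u, z) ↦ (u, -z)` of `F` corresponds to the map `Q ↦ -Q - P` on points of `E`,
where `P = (0, b)`. -/
theorem stmt_9 {K : Type*} [Field K] (hchar : (2 : K) ≠ 0) (a b c : K)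
    (W : WeierstrassCurve.Affine K) (hW : W = ⟨0, -a, 0, -c, b ^ 2⟩)
    (hΔ : W.Δ ≠ 0)
    (u z : K) (hz : z ^ 2 = (u ^ 2 + a) ^ 2 + 8 * b * u + 4 * c)
    (x xt y yt : K)
    (hx : x = (z + u ^ 2 + a) / 2) (hxt : xt = (-z + u ^ 2 + a) / 2)
    (hy : y = u * x + b) (hyt : yt = u * xt + b)
    (hne : ¬(z = 0 ∧ y = 0)) :
    ∃ (hQ : W.Nonsingular x y) (hQt : W.Nonsingular xt yt)
      (hP : W.Nonsingular 0 b),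
      WeierstrassCurve.Affine.Point.some _ _ hQt =
        -(WeierstrassCurve.Affine.Point.some _ _ hQ +
            WeierstrassCurve.Affine.Point.some _ _ hP) :=
  stmt_9_general hchar a b c W hW hΔ u z hz x xt y yt hx hxt hy hyt
end

section
/- Let $M$ be a field of characteristic different from $2$ and let $v, w \in M$ with $w^2 = v$ and $v \neq 0$, $v \neq 1$. Define $c_2 = (3v^2 + 9v - 20)/(4(1-v))$, $c_1 = (v-4)(v^3 + 3v^2 - 4v - 32)/(16(1-v))$, $c_0 = (v-4)^3(v^2 + 3v + 4)/(64(1-v))$, and define $\beta_1 = (w-2)(w+2)/4$, $\beta_2 = -(2+w)^2(2 - w + w^2)/(4(1+w))$, $\beta_3 = -(2-w)^2(2 + w + w^2)/(4(1-w))$. Then in $M[T]$ one has the polynomial identity $T^3 - c_2T^2 + c_1T - c_0 = (T - \beta_1)(T - \beta_2)(T - \beta_3)$. -/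
/-!
The `βᵢ` are the roots of the cubic, so by Vieta it suffices to check that `c₂`, `c₁`, `c₀` are
the elementary symmetric functions of the `βᵢ`. After substituting `v = w²`, so that
`1 - v = (1 - w)(1 + w)`, these are identities of rational functions in `w`.
-/

open Polynomial

theorem X_sub_C_mul_X_sub_C_mul_X_sub_C {R : Type*} [CommRing R] (a b c : R) :
    (X - C a) * (X - C b) * (X - C c) =
      X ^ 3 - C (a + b + c) * X ^ 2 + C (a * b + a * c + b * c) * X - C (a * b * c) := by
  simp only [map_add, map_mul]
  ring

section SqNeOne

variable {R : Type*} [Ring R] {a : R}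

theorem one_add_ne_zero_of_sq_ne_one (h : a ^ 2 ≠ 1) : 1 + a ≠ 0 := fun h0 =>
  h (by rw [eq_neg_of_add_eq_zero_right h0, neg_one_sq])

theorem one_sub_ne_zero_of_sq_ne_one (h : a ^ 2 ≠ 1) : 1 - a ≠ 0 := fun h0 =>
  h (by rw [← sub_eq_zero.mp h0, one_pow])

end SqNeOne

theorem stmt_12_general {M : Type*} [Field M] (v w : M)
    (hw : w ^ 2 = v) (hv1 : v ≠ 1) :
    let c2 : M := (3 * v ^ 2 + 9 * v - 20) / (4 * (1 - v))
    let c1 : M := (v - 4) * (v ^ 3 + 3 * v ^ 2 - 4 * v - 32) / (16 * (1 - v))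
    let c0 : M := (v - 4) ^ 3 * (v ^ 2 + 3 * v + 4) / (64 * (1 - v))
    let β₁ : M := (w - 2) * (w + 2) / 4
    let β₂ : M := -(2 + w) ^ 2 * (2 - w + w ^ 2) / (4 * (1 + w))
    let β₃ : M := -(2 - w) ^ 2 * (2 + w + w ^ 2) / (4 * (1 - w))
    (X ^ 3 - C c2 * X ^ 2 + C c1 * X - C c0 : M[X]) =
      (X - C β₁) * (X - C β₂) * (X - C β₃) := by
  intro c2 c1 c0 β₁ β₂ β₃
  subst hw
  have hp : 1 + w ≠ 0 := one_add_ne_zero_of_sq_ne_one hv1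
  have hm : 1 - w ≠ 0 := one_sub_ne_zero_of_sq_ne_one hv1
  have hsum : c2 = β₁ + β₂ + β₃ := by
    simp only [c2, β₁, β₂, β₃]; field_simp; ring
  have hpairs : c1 = β₁ * β₂ + β₁ * β₃ + β₂ * β₃ := by
    simp only [c1, β₁, β₂, β₃]; field_simp; ring
  have hprod : c0 = β₁ * β₂ * β₃ := by
    simp only [c0, β₁, β₂, β₃]; field_simp; ring
  rw [X_sub_C_mul_X_sub_C_mul_X_sub_C, hsum, hpairs, hprod]

/-- The explicit factorization of the cubic `h` in the proof of Theorem 2: with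
`w² = v`, the cubic `T³ - c₂T² + c₁T - c₀` factors as `(T - β₁)(T - β₂)(T - β₃)`. -/
theorem stmt_12 {M : Type*} [Field M] (hchar : (2 : M) ≠ 0) (v w : M)
    (hw : w ^ 2 = v) (hv0 : v ≠ 0) (hv1 : v ≠ 1) :
    let c2 : M := (3 * v ^ 2 + 9 * v - 20) / (4 * (1 - v))
    let c1 : M := (v - 4) * (v ^ 3 + 3 * v ^ 2 - 4 * v - 32) / (16 * (1 - v))
    let c0 : M := (v - 4) ^ 3 * (v ^ 2 + 3 * v + 4) / (64 * (1 - v))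
    let β₁ : M := (w - 2) * (w + 2) / 4
    let β₂ : M := -(2 + w) ^ 2 * (2 - w + w ^ 2) / (4 * (1 + w))
    let β₃ : M := -(2 - w) ^ 2 * (2 + w + w ^ 2) / (4 * (1 - w))
    (X ^ 3 - C c2 * X ^ 2 + C c1 * X - C c0 : M[X]) =
      (X - C β₁) * (X - C β₂) * (X - C β₃) :=
  stmt_12_general v w hw hv1
end

section
/- Let $M$ be a field of characteristic different from $2$ and let $v, w \in M$ with $w^2 = v$, $v(v-1)(v-4) \neq 0$, and $(v^2-v+4)(v^2+v+2)(v^2+3v+4)(v^3-6v^2-7v-4)(v^3-4v^2+7v+4) \neq 0$. Define $\rho_1 = (-2+w)(1+w)/(2w^2)$, $\rho_2 = (-2-w)(1-w)/(2w^2)$, $\rho_3 = -2(2+w)/((-2+w)(1+w))$, $\rho_4 = (-2-w)(1-w)/((-w)(-1-w))$, $\rho_5 = (-2+w)(1+w)/(w(-1+w))$, $\rho_6 = -2(2-w)/((-2-w)(1-w))$. Then the determinants of the two $3 \times 3$ matrices $\begin{pmatrix} 1 & \rho_1+\rho_5 & \rho_1\rho_5 \\ 1 & \rho_2+\rho_4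 & \rho_2\rho_4 \\ 1 & \rho_3+\rho_6 & \rho_3\rho_6 \end{pmatrix}$ and $\begin{pmatrix} 1 & \rho_1+\rho_3 & \rho_1\rho_3 \\ 1 & \rho_2+\rho_6 & \rho_2\rho_6 \\ 1 & \rho_4+\rho_5 & \rho_4\rho_5 \end{pmatrix}$ are both nonzero. -/
theorem aux_vec {M : Type*} (n : ℕ) (c : M) :
    Matrix.vecHead (Matrix.vecTail fun _ : Fin (n + 2) => c) = c := rfl

set_option maxHeartbeats 1600000 in
/-- In the proof of Theorem 2, the determinants governing the existence of the two
Richelot duals `C` and `C'` of the curve `D : y² = ∏(x - ρᵢ)` are both nonzero. -/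
theorem stmt_14 {M : Type*} [Field M] (hchar : (2 : M) ≠ 0) (v w : M)
    (hw : w ^ 2 = v) (hv : v * (v - 1) * (v - 4) ≠ 0)
    (hv' : (v ^ 2 - v + 4) * (v ^ 2 + v + 2) * (v ^ 2 + 3 * v + 4) *
        (v ^ 3 - 6 * v ^ 2 - 7 * v - 4) * (v ^ 3 - 4 * v ^ 2 + 7 * v + 4) ≠ 0) :
    let ρ₁ : M := (-2 + w) * (1 + w) / (2 * w ^ 2)
    let ρ₂ : M := (-2 - w) * (1 - w) / (2 * w ^ 2)
    let ρ₃ : M := -2 * (2 + w) / ((-2 + w) * (1 + w))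
    let ρ₄ : M := (-2 - w) * (1 - w) / ((-w) * (-1 - w))
    let ρ₅ : M := (-2 + w) * (1 + w) / (w * (-1 + w))
    let ρ₆ : M := -2 * (2 - w) / ((-2 - w) * (1 - w))
    (!![1, ρ₁ + ρ₅, ρ₁ * ρ₅; 1, ρ₂ + ρ₄, ρ₂ * ρ₄; 1, ρ₃ + ρ₆, ρ₃ * ρ₆] : Matrix
        (Fin 3) (Fin 3) M).det ≠ 0 ∧
      (!![1, ρ₁ + ρ₃, ρ₁ * ρ₃; 1, ρ₂ + ρ₆, ρ₂ * ρ₆; 1, ρ₄ + ρ₅, ρ₄ * ρ₅] : Matrix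
        (Fin 3) (Fin 3) M).det ≠ 0 := by
  subst hw
  intro ρ₁ ρ₂ ρ₃ ρ₄ ρ₅ ρ₆
  obtain ⟨hv0, hv1, hv4⟩ : w ^ 2 ≠ 0 ∧ w ^ 2 - 1 ≠ 0 ∧ w ^ 2 - 4 ≠ 0 := by
    refine ⟨fun h => hv ?_, fun h => hv ?_, fun h => hv ?_⟩ <;> rw [h] <;> ring
  have hw0 : w ≠ 0 := fun h => hv0 (by rw [h]; ring)
  have hwm1 : -1 + w ≠ 0 := fun h => hv1 (by
    have hw1 : w = 1 := by linear_combination h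
    rw [hw1]; ring)
  have hwp1 : 1 + w ≠ 0 := fun h => hv1 (by
    have hw1 : w = -1 := by linear_combination h
    rw [hw1]; ring)
  have hwm2 : -2 + w ≠ 0 := fun h => hv4 (by
    have hw1 : w = 2 := by linear_combination h
    rw [hw1]; ring)
  have hwp2 : 2 + w ≠ 0 := fun h => hv4 (by
    have hw1 : w = -2 := by linear_combination h
    rw [hw1]; ring)
  have h1m : 1 - w ≠ 0 := fun h => hwm1 (by linear_combination -h)
  have h1p : -1 - w ≠ 0 := fun h => hwp1 (by linear_combination -h)
  have h2m : 2 - w ≠ 0 := fun h => hwm2 (by linear_combination -h)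
  have h2p : -2 - w ≠ 0 := fun h => hwp2 (by linear_combination -h)
  have hA : w ^ 4 + 3 * w ^ 2 + 4 ≠ 0 := fun h => hv' (by linear_combination (((w^2) ^ 2 - w^2 + 4) * ((w^2) ^ 2 + w^2 + 2) * ((w^2) ^ 3 - 6 * (w^2) ^ 2 - 7 * w^2 - 4) * ((w^2) ^ 3 - 4 * (w^2) ^ 2 + 7 * w^2 + 4)) * h)
  have hB : w ^ 6 - 4 * w ^ 4 + 7 * w ^ 2 + 4 ≠ 0 := fun h => hv' (by linear_combination (((w^2) ^ 2 - w^2 + 4) * ((w^2) ^ 2 + w^2 + 2) * ((w^2) ^ 2 + 3 * w^2 + 4) * ((w^2) ^ 3 - 6 * (w^2) ^ 2 - 7 * w^2 - 4)) * h)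
  have hC : w ^ 4 + w ^ 2 + 2 ≠ 0 := fun h => hv' (by linear_combination (((w^2) ^ 2 - w^2 + 4) * ((w^2) ^ 2 + 3 * w^2 + 4) * ((w^2) ^ 3 - 6 * (w^2) ^ 2 - 7 * w^2 - 4) * ((w^2) ^ 3 - 4 * (w^2) ^ 2 + 7 * w^2 + 4)) * h)
  have hd1 : 2 * w ^ 2 ≠ 0 := mul_ne_zero hchar hv0
  have hd2 : (-2 + w) * (1 + w) ≠ 0 := mul_ne_zero hwm2 hwp1
  have hd3 : (-w) * (-1 - w) ≠ 0 := mul_ne_zero (neg_ne_zero.mpr hw0) h1p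
  have hd4 : w * (-1 + w) ≠ 0 := mul_ne_zero hw0 hwm1
  have hd5 : (-2 - w) * (1 - w) ≠ 0 := mul_ne_zero h2p h1m
  have h1 : ρ₁ * (2 * w ^ 2) = w ^ 2 - w - 2 := by
    show (-2 + w) * (1 + w) / (2 * w ^ 2) * (2 * w ^ 2) = _
    rw [div_mul_cancel₀ _ hd1]; ring
  have h2 : ρ₂ * (2 * w ^ 2) = w ^ 2 + w - 2 := by
    show (-2 - w) * (1 - w) / (2 * w ^ 2) * (2 * w ^ 2) = _
    rw [div_mul_cancel₀ _ hd1]; ring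
  have h3 : ρ₃ * ((-2 + w) * (1 + w)) = -2 * w - 4 := by
    show -2 * (2 + w) / ((-2 + w) * (1 + w)) * ((-2 + w) * (1 + w)) = _
    rw [div_mul_cancel₀ _ hd2]; ring
  have h4 : ρ₄ * ((-w) * (-1 - w)) = w ^ 2 + w - 2 := by
    show (-2 - w) * (1 - w) / ((-w) * (-1 - w)) * ((-w) * (-1 - w)) = _
    rw [div_mul_cancel₀ _ hd3]; ring
  have h5 : ρ₅ * (w * (-1 + w)) = w ^ 2 - w - 2 := by
    show (-2 + w) * (1 + w) / (w * (-1 + w)) * (w * (-1 + w)) = _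
    rw [div_mul_cancel₀ _ hd4]; ring
  have h6 : ρ₆ * ((-2 - w) * (1 - w)) = 2 * w - 4 := by
    show -2 * (2 - w) / ((-2 - w) * (1 - w)) * ((-2 - w) * (1 - w)) = _
    rw [div_mul_cancel₀ _ hd5]; ring
  clear_value ρ₁ ρ₂ ρ₃ ρ₄ ρ₅ ρ₆
  constructor
  · have key : (!![1, ρ₁ + ρ₅, ρ₁ * ρ₅; 1, ρ₂ + ρ₄, ρ₂ * ρ₄; 1, ρ₃ + ρ₆, ρ₃ * ρ₆] : Matrix
        (Fin 3) (Fin 3) M).det * (2 * (w ^ 5 * (w ^ 2 - 1) ^ 2 * (w ^ 2 - 4))) =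
        2 * ((w ^ 4 + 3 * w ^ 2 + 4) * (w ^ 6 - 4 * w ^ 4 + 7 * w ^ 2 + 4)) := by
      rw [Matrix.det_fin_three]
      simp only [Matrix.cons_val', Matrix.cons_val_zero, Matrix.cons_val_one, Matrix.head_cons,
        Matrix.empty_val', Matrix.cons_val_fin_one, Matrix.head_fin_const, Matrix.cons_val_two,
        Matrix.tail_cons, Matrix.of_apply, aux_vec, one_mul, mul_one]
      linear_combination (((-16 : M) + (-8 : M) * w + (-4 : M) * w ^ 2 + (-2 : M) * w ^ 3 + (10 : M) * w ^ 4 + (1 : M) * w ^ 5 + (2 : M) * w ^ 6 + (2 : M) * w ^ 7 + (-1 : M) * w ^ 9)) * h1 + (((16 : M) * w ^ 2 + (-20 : M) * w ^ 4 + (4 : M) * w ^ 6) * ρ₁ + ((16 : M) * w + (-32 : M) * w ^ 2 + (-8 : M) * w ^ 3 + (24 : M) * w ^ 4 + (1 : M) * w ^ 5 + (-2 : M) * w ^ 7 + (1 : M) * w ^ 9)) * h2 + (((8 : M) * w ^ 4 + (-8 : M) * w ^ 5 + (-2 : M) * w ^ 6 + (2 : M) * w ^ 7 + (2 : M) * w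 ^ 8 + (-2 : M) * w ^ 9) * ρ₂ + ((8 : M) * w ^ 4 + (-6 : M) * w ^ 6 + (-2 : M) * w ^ 7 + (-2 : M) * w ^ 8 + (2 : M) * w ^ 9) * ρ₁ + ((-32 : M) * w ^ 4 + (16 : M) * w ^ 5)) * h3 + (((8 : M) * w ^ 4 + (-8 : M) * w ^ 5 + (-10 : M) * w ^ 6 + (10 : M) * w ^ 7 + (2 : M) * w ^ 8 + (-2 : M) * w ^ 9) * ρ₂ * ρ₃ + ((-8 : M) * w ^ 4 + (8 : M) * w ^ 5 + (10 : M) * w ^ 6 + (-10 : M) * w ^ 7 + (-2 : M) * w ^ 8 + (2 : M) * w ^ 9) * ρ₁ * ρ₂ + ((-16 : M) * w ^ 4 + (16 : M) * w ^ 5 + (12 : M) * w ^ 6 + (-16 : M) * w ^ 7 + (4 : M) * w ^ 8) * ρ₃ + ((-16 : M) * w ^ 3 + (8 : M) * w ^ 4 + (12 : M) * w ^ 5 + (-2 : M) * w ^ 6 + (2 : M) * w ^ 7 + (-6 : M) * w ^ 8 + (2 : M) * w ^ 9) * ρ₂ + ((16 : M) * w ^ 3 + (8 : M) * w ^ 4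 + (-28 : M) * w ^ 5 + (-10 : M) * w ^ 6 + (14 : M) * w ^ 7 + (2 : M) * w ^ 8 + (-2 : M) * w ^ 9) * ρ₁) * h4 + (((8 : M) * w ^ 4 + (8 : M) * w ^ 5 + (-10 : M) * w ^ 6 + (-10 : M) * w ^ 7 + (2 : M) * w ^ 8 + (2 : M) * w ^ 9) * ρ₁ * ρ₃ + ((8 : M) * w ^ 4 + (8 : M) * w ^ 5 + (-10 : M) * w ^ 6 + (-10 : M) * w ^ 7 + (2 : M) * w ^ 8 + (2 : M) * w ^ 9) * ρ₂ * ρ₄ + ((-8 : M) * w ^ 4 + (-8 : M) * w ^ 5 + (10 : M) * w ^ 6 + (10 : M) * w ^ 7 + (-2 : M) * w ^ 8 + (-2 : M) * w ^ 9) * ρ₁ * ρ₂ + ((-8 : M) * w ^ 4 + (-8 : M) * w ^ 5 + (10 : M) * w ^ 6 + (10 : M) * w ^ 7 + (-2 : M) * w ^ 8 + (-2 : M) * w ^ 9) * ρ₁ * ρ₄ + ((-16 : M) * w ^ 4 + (-16 : M) * w ^ 5 + (12 : M) * w ^ 6 + (8 : M) * w ^ 7 + (-4 : M) * w ^ 8)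 * ρ₃ + ((16 : M) * w ^ 4 + (16 : M) * w ^ 5 + (-12 : M) * w ^ 6 + (-8 : M) * w ^ 7 + (4 : M) * w ^ 8) * ρ₁) * h5 + (((4 : M) * w ^ 5 + (2 : M) * w ^ 6 + (-6 : M) * w ^ 7 + (-2 : M) * w ^ 8 + (2 : M) * w ^ 9) * ρ₂ * ρ₃ + ((4 : M) * w ^ 5 + (2 : M) * w ^ 6 + (-6 : M) * w ^ 7 + (-2 : M) * w ^ 8 + (2 : M) * w ^ 9) * ρ₃ * ρ₄ + ((-4 : M) * w ^ 5 + (-2 : M) * w ^ 6 + (6 : M) * w ^ 7 + (2 : M) * w ^ 8 + (-2 : M) * w ^ 9) * ρ₂ * ρ₄ + ((-4 : M) * w ^ 5 + (-2 : M) * w ^ 6 + (6 : M) * w ^ 7 + (2 : M) * w ^ 8 + (-2 : M) * w ^ 9) * ρ₁ * ρ₃ + ((-4 : M) * w ^ 5 + (-2 : M) * w ^ 6 + (6 : M) * w ^ 7 + (2 : M) * w ^ 8 + (-2 : M) * w ^ 9) * ρ₃ * ρ₅ + ((4 : M) * w ^ 5 + (2 : M) * w ^ 6 + (-6 : M) *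 w ^ 7 + (-2 : M) * w ^ 8 + (2 : M) * w ^ 9) * ρ₁ * ρ₅) * h6
    intro h
    rw [h, zero_mul] at key
    exact mul_ne_zero hchar (mul_ne_zero hA hB) key.symm
  · have key : (!![1, ρ₁ + ρ₃, ρ₁ * ρ₃; 1, ρ₂ + ρ₆, ρ₂ * ρ₆; 1, ρ₄ + ρ₅, ρ₄ * ρ₅] : Matrix
        (Fin 3) (Fin 3) M).det * (2 * (w ^ 5 * (w ^ 2 - 1) ^ 2 * (w ^ 2 - 4))) =
        2 * (2 * (w ^ 4 + w ^ 2 + 2) * (w ^ 2 * ((w ^ 2 - 1) * (w ^ 2 - 4)))) := by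
      rw [Matrix.det_fin_three]
      simp only [Matrix.cons_val', Matrix.cons_val_zero, Matrix.cons_val_one, Matrix.head_cons,
        Matrix.empty_val', Matrix.cons_val_fin_one, Matrix.head_fin_const, Matrix.cons_val_two,
        Matrix.tail_cons, Matrix.of_apply, aux_vec, one_mul, mul_one]
      linear_combination (((-16 : M) * w + (8 : M) * w ^ 3 + (4 : M) * w ^ 4 + (-3 : M) * w ^ 5 + (6 : M) * w ^ 6 + (4 : M) * w ^ 7 + (-2 : M) * w ^ 8 + (-1 : M) * w ^ 9)) * h1 + (((-4 : M) * w ^ 6 + (4 : M) * w ^ 8) * ρ₁ + ((16 : M) * w + (-8 : M) * w ^ 3 + (1 : M) * w ^ 5 + (12 : M) * w ^ 6 + (-2 : M) * w ^ 7 + (-4 : M) * w ^ 8 + (1 : M) * w ^ 9)) * h2 + (((-4 : M) * w ^ 5 + (2 : M) * w ^ 6 + (6 : M) * w ^ 7 + (-2 : M) * w ^ 8 + (-2 : M) * w ^ 9) * ρ₁ * ρ₂ + ((8 : M) * w ^ 5 + (-4 : M) * w ^ 6 + (-8 : M) * w ^ 7 + (4 : M) * w ^ 8) * ρ₂ + ((16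 : M) * w ^ 5 + (-8 : M) * w ^ 6 + (-12 : M) * w ^ 7 + (4 : M) * w ^ 9) * ρ₁ + ((16 : M) * w ^ 3 + (-8 : M) * w ^ 4 + (-28 : M) * w ^ 5 + (10 : M) * w ^ 6 + (14 : M) * w ^ 7 + (-2 : M) * w ^ 8 + (-2 : M) * w ^ 9)) * h3 + (((-8 : M) * w ^ 4 + (8 : M) * w ^ 5 + (10 : M) * w ^ 6 + (-10 : M) * w ^ 7 + (-2 : M) * w ^ 8 + (2 : M) * w ^ 9) * ρ₁ * ρ₃ + ((-16 : M) * w ^ 3 + (8 : M) * w ^ 4 + (12 : M) * w ^ 5 + (-2 : M) * w ^ 6 + (2 : M) * w ^ 7 + (-6 : M) * w ^ 8 + (2 : M) * w ^ 9) * ρ₂ + ((16 : M) * w ^ 3 + (8 : M) * w ^ 4 + (-28 : M) * w ^ 5 + (-10 : M) * w ^ 6 + (14 : M) * w ^ 7 + (2 : M) * w ^ 8 + (-2 : M) * w ^ 9) * ρ₁ + ((16 : M) * w ^ 3 + (8 : M) * w ^ 4 + (-28 : M) * w ^ 5 + (-10 : M) * w ^ 6 + (14 : M) * w ^ 7 +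 (2 : M) * w ^ 8 + (-2 : M) * w ^ 9) * ρ₃ + ((-32 : M) * w ^ 3 + (-16 : M) * w ^ 4 + (40 : M) * w ^ 5 + (4 : M) * w ^ 6 + (-16 : M) * w ^ 7 + (4 : M) * w ^ 8)) * h4 + (((8 : M) * w ^ 4 + (8 : M) * w ^ 5 + (-10 : M) * w ^ 6 + (-10 : M) * w ^ 7 + (2 : M) * w ^ 8 + (2 : M) * w ^ 9) * ρ₂ * ρ₄ + ((-8 : M) * w ^ 4 + (-8 : M) * w ^ 5 + (10 : M) * w ^ 6 + (10 : M) * w ^ 7 + (-2 : M) * w ^ 8 + (-2 : M) * w ^ 9) * ρ₁ * ρ₄ + ((-8 : M) * w ^ 4 + (-8 : M) * w ^ 5 + (10 : M) * w ^ 6 + (10 : M) * w ^ 7 + (-2 : M) * w ^ 8 + (-2 : M) * w ^ 9) * ρ₃ * ρ₄ + ((8 : M) * w ^ 4 + (8 : M) * w ^ 5 + (-10 : M) * w ^ 6 + (-10 : M) * w ^ 7 + (2 : M) * w ^ 8 + (2 : M) * w ^ 9) * ρ₁ * ρ₃ + ((16 : M) * w ^ 4 + (16 : M) * w ^ 5 +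 (-12 : M) * w ^ 6 + (-8 : M) * w ^ 7 + (4 : M) * w ^ 8) * ρ₄ + ((-16 : M) * w ^ 4 + (-16 : M) * w ^ 5 + (12 : M) * w ^ 6 + (8 : M) * w ^ 7 + (-4 : M) * w ^ 8) * ρ₂) * h5 + (((4 : M) * w ^ 5 + (2 : M) * w ^ 6 + (-6 : M) * w ^ 7 + (-2 : M) * w ^ 8 + (2 : M) * w ^ 9) * ρ₄ * ρ₅ + ((-4 : M) * w ^ 5 + (-2 : M) * w ^ 6 + (6 : M) * w ^ 7 + (2 : M) * w ^ 8 + (-2 : M) * w ^ 9) * ρ₂ * ρ₄ + ((-4 : M) * w ^ 5 + (-2 : M) * w ^ 6 + (6 : M) * w ^ 7 + (2 : M) * w ^ 8 + (-2 : M) * w ^ 9) * ρ₂ * ρ₅ + ((4 : M) * w ^ 5 + (2 : M) * w ^ 6 + (-6 : M) * w ^ 7 + (-2 : M) * w ^ 8 + (2 : M) * w ^ 9) * ρ₁ * ρ₂ + ((4 : M) * w ^ 5 + (2 : M) * w ^ 6 + (-6 : M) * w ^ 7 + (-2 : M) * w ^ 8 + (2 : M) * w ^ 9) * ρ₂ *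 ρ₃ + ((-4 : M) * w ^ 5 + (-2 : M) * w ^ 6 + (6 : M) * w ^ 7 + (2 : M) * w ^ 8 + (-2 : M) * w ^ 9) * ρ₁ * ρ₃) * h6
    intro h
    rw [h, zero_mul] at key
    exact mul_ne_zero hchar (mul_ne_zero (mul_ne_zero (mul_ne_zero hchar hC) hv0)
      (mul_ne_zero hv1 hv4)) (by linear_combination key.symm)
end

section
/- Let $L$ be a field of characteristic different from $2$, and let $g_1, g_2, g_3 \in L[x]$ be monic polynomials of degree $2$, say $g_i = x^2 - t_ix + n_i$. Suppose that the product $f = g_1g_2g_3$ is squarefree (separable) and that the determinant $d$ of the $3 \times 3$ matrix with rows $(1, t_1, n_1)$, $(1, t_2, n_2)$, $(1, t_3, n_3)$ is nonzero. Define $h_1 = g_3g_2' - g_2g_3'$, $h_2 = g_1g_3' - g_3g_1'$, $h_3 = g_2g_1' - g_1g_2'$, where $'$ denotes the formal derivative. Then the product $h_1h_2h_3$ is a squarefree polynomial of degree $5$ or $6$. -/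
set_option maxHeartbeats 4000000
open Polynomial

private lemma deriv_quad {K : Type*} [CommRing K] (a b c : K) :
    derivative (C a * X ^ 2 + C b * X + C c) = C (2 * a) * X + C b := by
  simp only [derivative_add, derivative_mul, derivative_C, derivative_X_pow, derivative_X,
    map_mul, map_ofNat, Nat.cast_ofNat, map_natCast]
  ring

private lemma bezout_isCoprime {K : Type*} [Field K] {p q : K[X]} (u v : K[X]) {e : K}
    (he : e ≠ 0) (h : u * p + v * q = C e) : IsCoprime p q := by
  refine ⟨C e⁻¹ * u, C e⁻¹ * v, ?_⟩
  have h2 : C e⁻¹ * (u * p + v * q) = 1 := by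
    rw [h, ← C_mul, inv_mul_cancel₀ he, C_1]
  linear_combination h2

private lemma sep_quad {K : Type*} [Field K] {a b c : K} (h : b ^ 2 - 4 * (a * c) ≠ 0) :
    (C a * X ^ 2 + C b * X + C c).Separable := by
  rw [separable_def, deriv_quad]
  refine bezout_isCoprime (C (-(4 * a))) (C (2 * a) * X + C b) h ?_
  simp only [map_neg, map_mul, map_sub, map_pow, map_ofNat]
  ring

private lemma ne_zero_quad {K : Type*} [Field K] {a b c : K} (h : b ^ 2 - 4 * (a * c) ≠ 0) :
    (C a * X ^ 2 + C b * X + C c) ≠ 0 := by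
  intro h0
  have hs := sep_quad h
  rw [h0, separable_def, derivative_zero] at hs
  exact not_isUnit_zero (isCoprime_zero_left.mp hs)

private lemma natdeg_monic_quad {K : Type*} [Field K] (t n : K) :
    (X ^ 2 - C t * X + C n : K[X]).natDegree = 2 := by
  have h : (X ^ 2 - C t * X + C n : K[X]) = C 1 * X ^ 2 + C (-t) * X + C n := by
    simp only [map_one, map_neg]; ring
  rw [h, natDegree_quadratic one_ne_zero]

private lemma disc_ne_zero {K : Type*} [Field K] (h2 : (2 : K) ≠ 0) {t n : K} {g : K[X]}
    (hg : g = X ^ 2 - C t * X + C n) (hsf : Squarefree g) : t ^ 2 - 4 * n ≠ 0 := by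
  intro h
  have h4 : (4 : K) ≠ 0 := by
    have h42 : (4 : K) = 2 * 2 := by norm_num
    rw [h42]; exact mul_ne_zero h2 h2
  have hn : n = t / 2 * (t / 2) := by field_simp; linear_combination -h
  have ht : C t = C 2 * C (t / 2) := by
    rw [← C_mul]; congr 1; field_simp
  have hg2 : g = (X - C (t / 2)) ^ 2 := by
    rw [hg, hn, ht, map_mul, map_ofNat]; ring
  have hu := hsf (X - C (t / 2)) ⟨1, by rw [hg2, sq, mul_one]⟩
  have hdeg := natDegree_eq_zero_of_isUnit hu
  rw [natDegree_X_sub_C] at hdeg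
  exact one_ne_zero hdeg

private lemma res_ne_zero {K : Type*} [Field K] {t₂ t₃ n₂ n₃ : K} {g₂ g₃ : K[X]}
    (hg₂ : g₂ = X ^ 2 - C t₂ * X + C n₂) (hg₃ : g₃ = X ^ 2 - C t₃ * X + C n₃)
    (hcop : IsCoprime g₂ g₃) :
    (n₂ - n₃) ^ 2 + t₃ ^ 2 * n₂ + t₂ ^ 2 * n₃ - t₂ * t₃ * (n₂ + n₃) ≠ 0 := by
  intro hR
  by_cases ht : t₂ = t₃
  · have h0 : (n₂ - n₃) ^ 2 = 0 := by rw [ht] at hR; linear_combination hR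
    have hn : n₂ = n₃ := sub_eq_zero.mp ((pow_eq_zero_iff (by norm_num : (2:ℕ) ≠ 0)).mp h0)
    have hgg : g₂ = g₃ := by rw [hg₂, hg₃, ht, hn]
    rw [hgg] at hcop
    have hdeg := natDegree_eq_zero_of_isUnit (isCoprime_self.mp hcop)
    rw [hg₃, natdeg_monic_quad] at hdeg
    omega
  · have hts : t₂ - t₃ ≠ 0 := sub_ne_zero.mpr ht
    set x₀ := (n₂ - n₃) / (t₂ - t₃) with hx₀
    have key2 : (t₂ - t₃) ^ 2 * (x₀ ^ 2 - t₂ * x₀ + n₂)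
        = (n₂ - n₃) ^ 2 + t₃ ^ 2 * n₂ + t₂ ^ 2 * n₃ - t₂ * t₃ * (n₂ + n₃) := by
      rw [hx₀]; field_simp; ring
    have key3 : (t₂ - t₃) ^ 2 * (x₀ ^ 2 - t₃ * x₀ + n₃)
        = (n₂ - n₃) ^ 2 + t₃ ^ 2 * n₂ + t₂ ^ 2 * n₃ - t₂ * t₃ * (n₂ + n₃) := by
      rw [hx₀]; field_simp; ring
    have e2 : g₂.eval x₀ = 0 := by
      rw [hg₂]
      have := key2
      rw [hR] at this
      rcases mul_eq_zero.mp this with h | h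
      · exact absurd h (pow_ne_zero 2 hts)
      · simp only [eval_add, eval_sub, eval_mul, eval_pow, eval_X, eval_C]
        linear_combination h
    have e3 : g₃.eval x₀ = 0 := by
      rw [hg₃]
      have := key3
      rw [hR] at this
      rcases mul_eq_zero.mp this with h | h
      · exact absurd h (pow_ne_zero 2 hts)
      · simp only [eval_add, eval_sub, eval_mul, eval_pow, eval_X, eval_C]
        linear_combination h
    obtain ⟨u, v, huv⟩ := hcop
    have := congrArg (eval x₀) huv
    simp [e2, e3] at this

/-- The assertion underlying the definition of the Richelot dual: if `f = g₁g₂g₃` is a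
squarefree product of monic quadratics `gᵢ = x² - tᵢx + nᵢ` over a field of
characteristic not 2, and the determinant `d` of the matrix with rows `(1, tᵢ, nᵢ)` is
nonzero, then `h₁h₂h₃` is squarefree of degree 5 or 6, where `h₁ = g₃g₂' - g₂g₃'`,
`h₂ = g₁g₃' - g₃g₁'`, `h₃ = g₂g₁' - g₁g₂'`. -/
theorem stmt_19 {L : Type*} [Field L] (hchar : (2 : L) ≠ 0)
    (t₁ t₂ t₃ n₁ n₂ n₃ : L) (g₁ g₂ g₃ : L[X])
    (hg₁ : g₁ = X ^ 2 - C t₁ * X + C n₁)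
    (hg₂ : g₂ = X ^ 2 - C t₂ * X + C n₂)
    (hg₃ : g₃ = X ^ 2 - C t₃ * X + C n₃)
    (hf : Squarefree (g₁ * g₂ * g₃))
    (hd : (!![1, t₁, n₁; 1, t₂, n₂; 1, t₃, n₃] : Matrix (Fin 3) (Fin 3) L).det ≠ 0) :
    Squarefree ((g₃ * derivative g₂ - g₂ * derivative g₃) *
        (g₁ * derivative g₃ - g₃ * derivative g₁) *
        (g₂ * derivative g₁ - g₁ * derivative g₂)) ∧
      (((g₃ * derivative g₂ - g₂ * derivative g₃) *
        (g₁ * derivative g₃ - g₃ * derivative g₁) *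
        (g₂ * derivative g₁ - g₁ * derivative g₂)).natDegree = 5 ∨
       ((g₃ * derivative g₂ - g₂ * derivative g₃) *
        (g₁ * derivative g₃ - g₃ * derivative g₁) *
        (g₂ * derivative g₁ - g₁ * derivative g₂)).natDegree = 6) := by
  classical
  have h4 : (4 : L) ≠ 0 := by
    have h42 : (4 : L) = 2 * 2 := by norm_num
    rw [h42]; exact mul_ne_zero hchar hchar
  have hcopg : ∀ {a b : L[X]}, Squarefree (a * b) → IsCoprime a b := by
    intro a b h
    rw [← EuclideanDomain.gcd_isUnit_iff]
    exact h _ (mul_dvd_mul (EuclideanDomain.gcd_dvd_left a b) (EuclideanDomain.gcd_dvd_right a b))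
  have cop12 : IsCoprime g₁ g₂ := hcopg hf.of_mul_left
  have cop23 : IsCoprime g₂ g₃ := by
    have hf' : Squarefree (g₁ * (g₂ * g₃)) := by rwa [← mul_assoc]
    exact hcopg hf'.of_mul_right
  have cop13 : IsCoprime g₁ g₃ := by
    have hf' : Squarefree (g₂ * (g₁ * g₃)) := by
      have e : g₁ * g₂ * g₃ = g₂ * (g₁ * g₃) := by ring
      rwa [e] at hf
    exact hcopg hf'.of_mul_right
  have sf1 : Squarefree g₁ := hf.of_mul_left.of_mul_left
  have sf2 : Squarefree g₂ := hf.of_mul_left.of_mul_right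
  have sf3 : Squarefree g₃ := hf.of_mul_right
  have hD1 : t₁ ^ 2 - 4 * n₁ ≠ 0 := disc_ne_zero hchar hg₁ sf1
  have hD2 : t₂ ^ 2 - 4 * n₂ ≠ 0 := disc_ne_zero hchar hg₂ sf2
  have hD3 : t₃ ^ 2 - 4 * n₃ ≠ 0 := disc_ne_zero hchar hg₃ sf3
  have hR23 := res_ne_zero hg₂ hg₃ cop23
  have hR13 := res_ne_zero hg₁ hg₃ cop13
  have hR12 := res_ne_zero hg₁ hg₂ cop12
  have hd' : t₂ * n₃ + t₃ * n₁ + t₁ * n₂ - t₃ * n₂ - t₁ * n₃ - t₂ * n₁ ≠ 0 := by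
    intro h
    apply hd
    rw [Matrix.det_fin_three]
    simp [Matrix.vecHead, Matrix.vecTail]
    linear_combination h
  have dq : ∀ t n : L, derivative (X ^ 2 - C t * X + C n) = C 2 * X - C t := by
    intro t n
    simp only [derivative_add, derivative_sub, derivative_mul, derivative_C, derivative_X_pow,
      derivative_X, Nat.cast_ofNat, map_natCast]
    ring
  have e₁ : g₃ * derivative g₂ - g₂ * derivative g₃ = C (t₂ - t₃) * X ^ 2 + C (2 * (n₃ - n₂)) * X + C (t₃ * n₂ - t₂ * n₃) := by
    rw [hg₂, hg₃, dq, dq]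
    simp only [map_sub, map_mul, map_add, map_ofNat]
    ring
  have e₂ : g₁ * derivative g₃ - g₃ * derivative g₁ = C (t₃ - t₁) * X ^ 2 + C (2 * (n₁ - n₃)) * X + C (t₁ * n₃ - t₃ * n₁) := by
    rw [hg₁, hg₃, dq, dq]
    simp only [map_sub, map_mul, map_add, map_ofNat]
    ring
  have e₃ : g₂ * derivative g₁ - g₁ * derivative g₂ = C (t₁ - t₂) * X ^ 2 + C (2 * (n₂ - n₁)) * X + C (t₂ * n₁ - t₁ * n₂) := by
    rw [hg₁, hg₂, dq, dq]
    simp only [map_sub, map_mul, map_add, map_ofNat]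
    ring
  have d₁ : (2 * (n₃ - n₂)) ^ 2 - 4 * ((t₂ - t₃) * (t₃ * n₂ - t₂ * n₃)) ≠ 0 := by
    intro h
    exact (mul_ne_zero h4 hR23) (by linear_combination h)
  have d₂ : (2 * (n₁ - n₃)) ^ 2 - 4 * ((t₃ - t₁) * (t₁ * n₃ - t₃ * n₁)) ≠ 0 := by
    intro h
    exact (mul_ne_zero h4 hR13) (by linear_combination h)
  have d₃ : (2 * (n₂ - n₁)) ^ 2 - 4 * ((t₁ - t₂) * (t₂ * n₁ - t₁ * n₂)) ≠ 0 := by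
    intro h
    exact (mul_ne_zero h4 hR12) (by linear_combination h)
  have sep1 := sep_quad d₁
  have sep2 := sep_quad d₂
  have sep3 := sep_quad d₃
  have ne1 := ne_zero_quad d₁
  have ne2 := ne_zero_quad d₂
  have ne3 := ne_zero_quad d₃
  have hE1 : ((t₂ * n₃ + t₃ * n₁ + t₁ * n₂ - t₃ * n₂ - t₁ * n₃ - t₂ * n₁) ^ 2 * (t₁ ^ 2 - 4 * n₁)) ≠ 0 := mul_ne_zero (pow_ne_zero 2 hd') hD1
  have hE2 : ((t₂ * n₃ + t₃ * n₁ + t₁ * n₂ - t₃ * n₂ - t₁ * n₃ - t₂ * n₁) ^ 2 * (t₂ ^ 2 - 4 * n₂)) ≠ 0 := mul_ne_zero (pow_ne_zero 2 hd') hD2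
  have hE3 : ((t₂ * n₃ + t₃ * n₁ + t₁ * n₂ - t₃ * n₂ - t₁ * n₃ - t₂ * n₁) ^ 2 * (t₃ ^ 2 - 4 * n₃)) ≠ 0 := mul_ne_zero (pow_ne_zero 2 hd') hD3
  have coph23 : IsCoprime (C (t₃ - t₁) * X ^ 2 + C (2 * (n₁ - n₃)) * X + C (t₁ * n₃ - t₃ * n₁)) (C (t₁ - t₂) * X ^ 2 + C (2 * (n₂ - n₁)) * X + C (t₂ * n₁ - t₁ * n₂)) := by
    refine bezout_isCoprime (C ((-2)*t₂*t₃*n₂ + 2*t₂*t₃*n₁ + 2*t₂^2*n₃ + (-2)*t₂^2*n₁ + 2*t₁*t₃*n₂ + (-2)*t₁*t₃*n₁ + (-4)*t₁*t₂*n₃ + 2*t₁*t₂*n₂ + 2*t₁*t₂*n₁ + 2*t₁^2*n₃ + (-2)*t₁^2*n₂) * X + C (4*t₃*n₂^2 + (-8)*t₃*n₁*n₂ + 4*t₃*n₁^2 + (-4)*t₂*n₂*n₃ + 4*t₂*n₁*n₃ + 4*t₂*n₁*n₂ + (-4)*t₂*n₁^2 + 4*t₁*n₂*n₃ + (-4)*t₁*n₂^2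 + (-4)*t₁*n₁*n₃ + 4*t₁*n₁*n₂ + (-1)*t₁*t₂*t₃*n₂ + t₁*t₂*t₃*n₁ + t₁*t₂^2*n₃ + (-1)*t₁*t₂^2*n₁ + t₁^2*t₃*n₂ + (-1)*t₁^2*t₃*n₁ + (-2)*t₁^2*t₂*n₃ + t₁^2*t₂*n₂ + t₁^2*t₂*n₁ + t₁^3*n₃ + (-1)*t₁^3*n₂))
      (C ((-2)*t₃^2*n₂ + 2*t₃^2*n₁ + 2*t₂*t₃*n₃ + (-2)*t₂*t₃*n₁ + (-2)*t₁*t₃*n₃ + 4*t₁*t₃*n₂ + (-2)*t₁*t₃*n₁ + (-2)*t₁*t₂*n₃ + 2*t₁*t₂*n₁ + 2*t₁^2*n₃ + (-2)*t₁^2*n₂) * X + C (4*t₃*n₂*n₃ + (-4)*t₃*n₁*n₃ + (-4)*t₃*n₁*n₂ + 4*t₃*n₁^2 + (-4)*t₂*n₃^2 + 8*t₂*n₁*n₃ + (-4)*t₂*n₁^2 + 4*t₁*n₃^2 + (-4)*t₁*n₂*n₃ + (-4)*t₁*n₁*n₃ + 4*t₁*n₁*n₂ + (-1)*t₁*t₃^2*n₂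 + t₁*t₃^2*n₁ + t₁*t₂*t₃*n₃ + (-1)*t₁*t₂*t₃*n₁ + (-1)*t₁^2*t₃*n₃ + 2*t₁^2*t₃*n₂ + (-1)*t₁^2*t₃*n₁ + (-1)*t₁^2*t₂*n₃ + t₁^2*t₂*n₁ + t₁^3*n₃ + (-1)*t₁^3*n₂)) hE1 ?_
    simp only [map_add, map_sub, map_mul, map_neg, map_pow, map_ofNat, map_one]
    ring
  have coph13 : IsCoprime (C (t₂ - t₃) * X ^ 2 + C (2 * (n₃ - n₂)) * X + C (t₃ * n₂ - t₂ * n₃)) (C (t₁ - t₂) * X ^ 2 + C (2 * (n₂ - n₁)) * X + C (t₂ * n₁ - t₁ * n₂)) := by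
    refine bezout_isCoprime (C (2*t₂*t₃*n₂ + (-2)*t₂*t₃*n₁ + (-2)*t₂^2*n₃ + 2*t₂^2*n₁ + (-2)*t₁*t₃*n₂ + 2*t₁*t₃*n₁ + 4*t₁*t₂*n₃ + (-2)*t₁*t₂*n₂ + (-2)*t₁*t₂*n₁ + (-2)*t₁^2*n₃ + 2*t₁^2*n₂) * X + C ((-4)*t₃*n₂^2 + 8*t₃*n₁*n₂ + (-4)*t₃*n₁^2 + 4*t₂*n₂*n₃ + (-4)*t₂*n₁*n₃ + (-4)*t₂*n₁*n₂ + 4*t₂*n₁^2 + t₂^2*t₃*n₂ + (-1)*t₂^2*t₃*n₁ + (-1)*t₂^3*n₃ + t₂^3*n₁ + (-4)*t₁*n₂*n₃ + 4*t₁*n₂^2 + 4*t₁*n₁*n₃ + (-4)*t₁*n₁*n₂ + (-1)*t₁*t₂*t₃*n₂ + t₁*t₂*t₃*n₁ + 2*t₁*t₂^2*n₃ + (-1)*t₁*t₂^2*n₂ + (-1)*t₁*t₂^2*n₁ + (-1)*t₁^2*t₂*n₃ + t₁^2*t₂*n₂))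
      (C ((-2)*t₃^2*n₂ + 2*t₃^2*n₁ + 2*t₂*t₃*n₃ + 2*t₂*t₃*n₂ + (-4)*t₂*t₃*n₁ + (-2)*t₂^2*n₃ + 2*t₂^2*n₁ + (-2)*t₁*t₃*n₃ + 2*t₁*t₃*n₂ + 2*t₁*t₂*n₃ + (-2)*t₁*t₂*n₂) * X + C (4*t₃*n₂*n₃ + (-4)*t₃*n₂^2 + (-4)*t₃*n₁*n₃ + 4*t₃*n₁*n₂ + (-4)*t₂*n₃^2 + 4*t₂*n₂*n₃ + 4*t₂*n₁*n₃ + (-4)*t₂*n₁*n₂ + (-1)*t₂*t₃^2*n₂ + t₂*t₃^2*n₁ + t₂^2*t₃*n₃ + t₂^2*t₃*n₂ + (-2)*t₂^2*t₃*n₁ + (-1)*t₂^3*n₃ + t₂^3*n₁ + 4*t₁*n₃^2 + (-8)*t₁*n₂*n₃ + 4*t₁*n₂^2 + (-1)*t₁*t₂*t₃*n₃ + t₁*t₂*t₃*n₂ + t₁*t₂^2*n₃ + (-1)*t₁*t₂^2*n₂)) hE2 ?_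
    simp only [map_add, map_sub, map_mul, map_neg, map_pow, map_ofNat, map_one]
    ring
  have coph12 : IsCoprime (C (t₂ - t₃) * X ^ 2 + C (2 * (n₃ - n₂)) * X + C (t₃ * n₂ - t₂ * n₃)) (C (t₃ - t₁) * X ^ 2 + C (2 * (n₁ - n₃)) * X + C (t₁ * n₃ - t₃ * n₁)) := by
    refine bezout_isCoprime (C (2*t₃^2*n₂ + (-2)*t₃^2*n₁ + (-2)*t₂*t₃*n₃ + 2*t₂*t₃*n₁ + 2*t₁*t₃*n₃ + (-4)*t₁*t₃*n₂ + 2*t₁*t₃*n₁ + 2*t₁*t₂*n₃ + (-2)*t₁*t₂*n₁ + (-2)*t₁^2*n₃ + 2*t₁^2*n₂) * X + C ((-4)*t₃*n₂*n₃ + 4*t₃*n₁*n₃ + 4*t₃*n₁*n₂ + (-4)*t₃*n₁^2 + t₃^3*n₂ + (-1)*t₃^3*n₁ + 4*t₂*n₃^2 + (-8)*t₂*n₁*n₃ + 4*t₂*n₁^2 + (-1)*t₂*t₃^2*n₃ + t₂*t₃^2*n₁ + (-4)*t₁*n₃^2 + 4*t₁*n₂*n₃ + 4*t₁*n₁*n₃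 + (-4)*t₁*n₁*n₂ + t₁*t₃^2*n₃ + (-2)*t₁*t₃^2*n₂ + t₁*t₃^2*n₁ + t₁*t₂*t₃*n₃ + (-1)*t₁*t₂*t₃*n₁ + (-1)*t₁^2*t₃*n₃ + t₁^2*t₃*n₂))
      (C (2*t₃^2*n₂ + (-2)*t₃^2*n₁ + (-2)*t₂*t₃*n₃ + (-2)*t₂*t₃*n₂ + 4*t₂*t₃*n₁ + 2*t₂^2*n₃ + (-2)*t₂^2*n₁ + 2*t₁*t₃*n₃ + (-2)*t₁*t₃*n₂ + (-2)*t₁*t₂*n₃ + 2*t₁*t₂*n₂) * X + C ((-4)*t₃*n₂*n₃ + 4*t₃*n₂^2 + 4*t₃*n₁*n₃ + (-4)*t₃*n₁*n₂ + t₃^3*n₂ + (-1)*t₃^3*n₁ + 4*t₂*n₃^2 + (-4)*t₂*n₂*n₃ + (-4)*t₂*n₁*n₃ + 4*t₂*n₁*n₂ + (-1)*t₂*t₃^2*n₃ + (-1)*t₂*t₃^2*n₂ + 2*t₂*t₃^2*n₁ + t₂^2*t₃*n₃ + (-1)*t₂^2*t₃*n₁ + (-4)*t₁*n₃^2 + 8*t₁*n₂*n₃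 + (-4)*t₁*n₂^2 + t₁*t₃^2*n₃ + (-1)*t₁*t₃^2*n₂ + (-1)*t₁*t₂*t₃*n₃ + t₁*t₂*t₃*n₂)) hE3 ?_
    simp only [map_add, map_sub, map_mul, map_neg, map_pow, map_ofNat, map_one]
    ring
  have sepH : ((C (t₂ - t₃) * X ^ 2 + C (2 * (n₃ - n₂)) * X + C (t₃ * n₂ - t₂ * n₃)) * (C (t₃ - t₁) * X ^ 2 + C (2 * (n₁ - n₃)) * X + C (t₁ * n₃ - t₃ * n₁)) * (C (t₁ - t₂) * X ^ 2 + C (2 * (n₂ - n₁)) * X + C (t₂ * n₁ - t₁ * n₂))).Separable :=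
    (sep1.mul sep2 coph12).mul sep3 (coph13.mul_left coph23)
  rw [e₁, e₂, e₃]
  refine ⟨sepH.squarefree, ?_⟩
  rw [natDegree_mul (mul_ne_zero ne1 ne2) ne3, natDegree_mul ne1 ne2]
  have deg1 : t₂ ≠ t₃ → (C (t₂ - t₃) * X ^ 2 + C (2 * (n₃ - n₂)) * X + C (t₃ * n₂ - t₂ * n₃)).natDegree = 2 :=
    fun h => natDegree_quadratic (sub_ne_zero.mpr h)
  have deg2 : t₃ ≠ t₁ → (C (t₃ - t₁) * X ^ 2 + C (2 * (n₁ - n₃)) * X + C (t₁ * n₃ - t₃ * n₁)).natDegree = 2 :=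
    fun h => natDegree_quadratic (sub_ne_zero.mpr h)
  have deg3 : t₁ ≠ t₂ → (C (t₁ - t₂) * X ^ 2 + C (2 * (n₂ - n₁)) * X + C (t₂ * n₁ - t₁ * n₂)).natDegree = 2 :=
    fun h => natDegree_quadratic (sub_ne_zero.mpr h)
  have deg1' : t₂ = t₃ → (C (t₂ - t₃) * X ^ 2 + C (2 * (n₃ - n₂)) * X + C (t₃ * n₂ - t₂ * n₃)).natDegree = 1 := by
    intro h
    have hb : 2 * (n₃ - n₂) ≠ 0 := by
      intro hb
      exact d₁ (by linear_combination (2 * (n₃ - n₂)) * hb + (-(4 * (t₃ * n₂ - t₂ * n₃))) * h)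
    have h0 : t₂ - t₃ = 0 := sub_eq_zero.mpr h
    rw [h0, map_zero, zero_mul, zero_add]
    exact natDegree_linear hb
  have deg2' : t₃ = t₁ → (C (t₃ - t₁) * X ^ 2 + C (2 * (n₁ - n₃)) * X + C (t₁ * n₃ - t₃ * n₁)).natDegree = 1 := by
    intro h
    have hb : 2 * (n₁ - n₃) ≠ 0 := by
      intro hb
      exact d₂ (by linear_combination (2 * (n₁ - n₃)) * hb + (-(4 * (t₁ * n₃ - t₃ * n₁))) * h)
    have h0 : t₃ - t₁ = 0 := sub_eq_zero.mpr h
    rw [h0, map_zero, zero_mul, zero_add]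
    exact natDegree_linear hb
  have deg3' : t₁ = t₂ → (C (t₁ - t₂) * X ^ 2 + C (2 * (n₂ - n₁)) * X + C (t₂ * n₁ - t₁ * n₂)).natDegree = 1 := by
    intro h
    have hb : 2 * (n₂ - n₁) ≠ 0 := by
      intro hb
      exact d₃ (by linear_combination (2 * (n₂ - n₁)) * hb + (-(4 * (t₂ * n₁ - t₁ * n₂))) * h)
    have h0 : t₁ - t₂ = 0 := sub_eq_zero.mpr h
    rw [h0, map_zero, zero_mul, zero_add]
    exact natDegree_linear hb
  by_cases h23 : t₂ = t₃ <;> by_cases h31 : t₃ = t₁ <;> by_cases h12 : t₁ = t₂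
  · exact absurd (by linear_combination (n₃ - n₁) * h23 + (n₃ - n₂) * h31) hd'
  · exact absurd (by linear_combination (n₃ - n₁) * h23 + (n₃ - n₂) * h31) hd'
  · exact absurd ((h12.trans h23).symm) h31
  · rw [deg1' h23, deg2 h31, deg3 h12]; omega
  · exact absurd (h31.trans h12) (fun hh => h23 hh.symm)
  · rw [deg1 h23, deg2' h31, deg3 h12]; omega
  · rw [deg1 h23, deg2 h31, deg3' h12]; omega
  · rw [deg1 h23, deg2 h31, deg3 h12]; omega
end
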